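/- For every β ∈ ℝ and θ > 0, the function h_{β,θ}(z) = -(|z|^β/θ)·sinh(θ·log|z|) is positive and smooth on the punctured unit disk 𝔻₀, and u = log h_{β,θ} satisfies Δu(z) = -|z|^{2β-2}/h_{β,θ}(z)² for all z ∈ 𝔻₀. (This is the statement that the gauge-transformed model metric k_{β,θ} = diag(h_{β,θ}, h_{β,θ}⁻¹) of Section 3 is a harmonic (Hermitian–Einstein) metric for the Higgs field φ = [[0,0],[z^β/2,0]]·z⁻¹dz.) -/

import Mathlib

/-! In the coordinate `t = log |z|` the Laplacian of a radial function `g (log |z|)` is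
`g''(t) / |z|²`. Here `log h_{β,θ} = β t + log |sinh (θ t)| - log θ`, whose second derivative is
`-θ² / sinh² (θ t)`, and `-|z|^{2β-2} / h_{β,θ}²` is exactly this divided by `|z|²`. -/

open Real Complex Filter Topology Set

noncomputable section

/-- The punctured unit disk `𝔻₀ = {z : 0 < |z| < 1}`. -/
def puncturedDisk : Set ℂ := {z : ℂ | 0 < ‖z‖ ∧ ‖z‖ < 1}

/-- The Euclidean Laplacian `Δu = ∂²u/∂x² + ∂²u/∂y²` of a function on `ℂ ≅ ℝ²`. -/
def planarLaplacian (f : ℂ → ℝ) (z : ℂ) : ℝ :=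
  deriv (fun x : ℝ => deriv (fun x' : ℝ => f ⟨x', z.im⟩) x) z.re +
  deriv (fun y : ℝ => deriv (fun y' : ℝ => f ⟨z.re, y'⟩) y) z.im

/-- The gauge-transformed model metric `h_{β,θ}(z) = -(|z|^β/θ)·sinh(θ·log|z|)`. -/
def twistedConeMetric (β θ : ℝ) (z : ℂ) : ℝ :=
  -((‖z‖) ^ β / θ) * Real.sinh (θ * Real.log (‖z‖))

theorem Filter.EventuallyEq.planarLaplacian_eq {f₁ f₂ : ℂ → ℝ} {z : ℂ} (h : f₁ =ᶠ[𝓝 z] f₂) :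
    planarLaplacian f₁ z = planarLaplacian f₂ z := by
  have hre : Tendsto (fun x : ℝ => (⟨x, z.im⟩ : ℂ)) (𝓝 z.re) (𝓝 z) :=
    (equivRealProdCLM.symm.continuous.comp (continuous_id.prodMk continuous_const)).tendsto' _ _ rfl
  have him : Tendsto (fun y : ℝ => (⟨z.re, y⟩ : ℂ)) (𝓝 z.im) (𝓝 z) :=
    (equivRealProdCLM.symm.continuous.comp (continuous_const.prodMk continuous_id)).tendsto' _ _ rfl
  unfold planarLaplacian
  congr 1
  exacts [(h.comp_tendsto hre).deriv.deriv_eq, (h.comp_tendsto him).deriv.deriv_eq]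

lemma log_norm_mk (x y : ℝ) : Real.log ‖(⟨x, y⟩ : ℂ)‖ = Real.log (x ^ 2 + y ^ 2) / 2 := by
  rw [Complex.norm_def, Real.log_sqrt (normSq_nonneg _), normSq_mk, sq, sq]

lemma hasDerivAt_half_log_sq_add {c s : ℝ} (hs : 0 < s ^ 2 + c) :
    HasDerivAt (fun x => Real.log (x ^ 2 + c) / 2) (s / (s ^ 2 + c)) s := by
  refine ((((hasDerivAt_pow 2 s).add_const c).log hs.ne').div_const 2).congr_deriv ?_
  field_simp
  ring

section RadialLaplacian

variable {g g' : ℝ → ℝ} {g'' : ℝ}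

lemma deriv_deriv_comp_half_log_sq_add {c s : ℝ} (hs : 0 < s ^ 2 + c)
    (hg' : ∀ᶠ t in 𝓝 (Real.log (s ^ 2 + c) / 2), HasDerivAt g (g' t) t)
    (hg'' : HasDerivAt g' g'' (Real.log (s ^ 2 + c) / 2)) :
    deriv (fun x => deriv (fun x' => g (Real.log (x' ^ 2 + c) / 2)) x) s
      = (g'' * s ^ 2 + g' (Real.log (s ^ 2 + c) / 2) * (c - s ^ 2)) / (s ^ 2 + c) ^ 2 := by
  have hφ := hasDerivAt_half_log_sq_add hs
  have hpos : ∀ᶠ x in 𝓝 s, 0 < x ^ 2 + c :=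
    continuousAt_const.eventually_lt (by fun_prop) hs
  have hfirst : deriv (fun x => g (Real.log (x ^ 2 + c) / 2)) =ᶠ[𝓝 s]
      fun x => g' (Real.log (x ^ 2 + c) / 2) * (x / (x ^ 2 + c)) := by
    filter_upwards [hpos, hφ.continuousAt.tendsto.eventually hg'] with x hx hgx
    exact (hgx.comp x (hasDerivAt_half_log_sq_add hx)).deriv
  have hquot : HasDerivAt (fun x => x / (x ^ 2 + c)) ((c - s ^ 2) / (s ^ 2 + c) ^ 2) s := by
    refine ((hasDerivAt_id' s).div ((hasDerivAt_pow 2 s).add_const c) hs.ne').congr_deriv ?_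
    ring
  rw [hfirst.deriv_eq]
  refine ((hg''.comp s hφ).fun_mul hquot).deriv.trans ?_
  rw [Function.comp_apply]
  field_simp

theorem planarLaplacian_comp_log_norm {z : ℂ} (hz : z ≠ 0)
    (hg' : ∀ᶠ t in 𝓝 (Real.log ‖z‖), HasDerivAt g (g' t) t)
    (hg'' : HasDerivAt g' g'' (Real.log ‖z‖)) :
    planarLaplacian (fun w => g (Real.log ‖w‖)) z = g'' / ‖z‖ ^ 2 := by
  have hq : ‖z‖ ^ 2 = z.re ^ 2 + z.im ^ 2 := by rw [Complex.sq_norm, normSq_apply, sq, sq]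
  have hpos : 0 < z.re ^ 2 + z.im ^ 2 := hq ▸ by positivity
  have hlog : Real.log ‖z‖ = Real.log (z.re ^ 2 + z.im ^ 2) / 2 := by
    rw [← log_norm_mk, Complex.eta]
  have hlog' : Real.log ‖z‖ = Real.log (z.im ^ 2 + z.re ^ 2) / 2 := by rw [hlog, add_comm]
  simp only [planarLaplacian, log_norm_mk, add_comm (z.re ^ 2)]
  rw [deriv_deriv_comp_half_log_sq_add hpos (hlog ▸ hg') (hlog ▸ hg''),
    deriv_deriv_comp_half_log_sq_add (add_comm (z.re ^ 2) _ ▸ hpos) (hlog' ▸ hg') (hlog' ▸ hg''),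
    ← hlog, ← hlog', add_comm (z.im ^ 2), hq]
  field_simp
  ring

end RadialLaplacian

lemma hasDerivAt_log_sinh {x : ℝ} (hx : x ≠ 0) :
    HasDerivAt (fun x => Real.log (Real.sinh x)) (Real.cosh x / Real.sinh x) x :=
  (Real.hasDerivAt_sinh x).log (Real.sinh_ne_zero.2 hx)

lemma hasDerivAt_cosh_div_sinh {x : ℝ} (hx : x ≠ 0) :
    HasDerivAt (fun x => Real.cosh x / Real.sinh x) (-1 / Real.sinh x ^ 2) x := by
  refine ((Real.hasDerivAt_cosh x).div (Real.hasDerivAt_sinh x)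
    (Real.sinh_ne_zero.2 hx)).congr_deriv ?_
  congr 1
  linear_combination -Real.cosh_sq x

lemma isOpen_puncturedDisk : IsOpen puncturedDisk :=
  isOpen_Ioo.preimage continuous_norm

lemma twistedConeMetric_pos {β θ : ℝ} (hθ : 0 < θ) {z : ℂ} (hz : z ∈ puncturedDisk) :
    0 < twistedConeMetric β θ z := by
  have hsinh : Real.sinh (θ * Real.log ‖z‖) < 0 :=
    Real.sinh_neg_iff.2 (mul_neg_of_pos_of_neg hθ (Real.log_neg hz.1 hz.2))
  have hcoeff : 0 < ‖z‖ ^ β / θ := div_pos (Real.rpow_pos_of_pos hz.1 β) hθ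
  exact mul_pos_of_neg_of_neg (neg_neg_of_pos hcoeff) hsinh

lemma contDiffAt_twistedConeMetric {n : WithTop ℕ∞} (β θ : ℝ) {z : ℂ} (hz : z ≠ 0) :
    ContDiffAt ℝ n (twistedConeMetric β θ) z := by
  have hnorm : ContDiffAt ℝ n (‖·‖) z := contDiffAt_norm ℝ hz
  have hne : ‖z‖ ≠ 0 := norm_ne_zero_iff.2 hz
  exact ((hnorm.rpow_const_of_ne hne).div_const θ).neg.mul
    (contDiffAt_const.mul (hnorm.log hne)).sinh

-- `Real.log` is even, so the factor `sinh (θ * log ‖z‖) < 0` can stay inside the logarithm.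
lemma log_twistedConeMetric {β θ : ℝ} (hθ : θ ≠ 0) {z : ℂ} (hz : 0 < ‖z‖) (hz1 : ‖z‖ ≠ 1) :
    Real.log (twistedConeMetric β θ z)
      = β * Real.log ‖z‖ + Real.log (Real.sinh (θ * Real.log ‖z‖)) - Real.log θ := by
  have hsinh : Real.sinh (θ * Real.log ‖z‖) ≠ 0 :=
    Real.sinh_ne_zero.2 (mul_ne_zero hθ (Real.log_ne_zero_of_pos_of_ne_one hz hz1))
  have hpow : ‖z‖ ^ β ≠ 0 := (Real.rpow_pos_of_pos hz β).ne'
  have hcoeff : -(‖z‖ ^ β / θ) ≠ 0 := neg_ne_zero.2 (div_ne_zero hpow hθ)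
  rw [twistedConeMetric, Real.log_mul hcoeff hsinh, Real.log_neg_eq_log,
    Real.log_div hpow hθ, Real.log_rpow hz]
  ring

lemma planarLaplacian_log_twistedConeMetric {β θ : ℝ} (hθ : θ ≠ 0) {z : ℂ}
    (hz : z ∈ puncturedDisk) :
    planarLaplacian (fun z : ℂ => Real.log (twistedConeMetric β θ z)) z
      = -(‖z‖) ^ (2 * β - 2) / (twistedConeMetric β θ z) ^ 2 := by
  obtain ⟨h0, h1⟩ := hz
  have hlog : Real.log ‖z‖ ≠ 0 := (Real.log_neg h0 h1).ne
  have hnear : (fun w => Real.log (twistedConeMetric β θ w)) =ᶠ[𝓝 z]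
      fun w => β * Real.log ‖w‖ + Real.log (Real.sinh (θ * Real.log ‖w‖)) - Real.log θ := by
    filter_upwards [isOpen_puncturedDisk.mem_nhds ⟨h0, h1⟩] with w hw
    exact log_twistedConeMetric hθ hw.1 hw.2.ne
  have hmul (t : ℝ) : HasDerivAt (fun t => θ * t) θ t := by
    simpa using (hasDerivAt_id t).const_mul θ
  have hg' : ∀ᶠ t in 𝓝 (Real.log ‖z‖), HasDerivAt
      (fun t => β * t + Real.log (Real.sinh (θ * t)) - Real.log θ)
      (β + θ * (Real.cosh (θ * t) / Real.sinh (θ * t))) t := by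
    filter_upwards [eventually_ne_nhds hlog] with t ht
    refine ((((hasDerivAt_id' t).const_mul β).add ((hasDerivAt_log_sinh (mul_ne_zero hθ ht)).comp t
      (hmul t))).sub_const (Real.log θ)).congr_deriv ?_
    ring
  have hg'' : HasDerivAt (fun t => β + θ * (Real.cosh (θ * t) / Real.sinh (θ * t)))
      (θ * (-1 / Real.sinh (θ * Real.log ‖z‖) ^ 2 * θ)) (Real.log ‖z‖) :=
    (((hasDerivAt_cosh_div_sinh (mul_ne_zero hθ hlog)).comp _ (hmul _)).const_mul θ).const_add β
  have hpow : ‖z‖ ^ (2 * β - 2) = (‖z‖ ^ β) ^ 2 / ‖z‖ ^ 2 := by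
    rw [Real.rpow_sub h0, mul_comm 2 β, Real.rpow_mul h0.le, Real.rpow_two, Real.rpow_two]
  rw [hnear.planarLaplacian_eq, planarLaplacian_comp_log_norm (norm_pos_iff.1 h0) hg' hg'',
    twistedConeMetric, hpow]
  field_simp

/-- For every `β ∈ ℝ` and `θ > 0`, `h_{β,θ}` is positive and smooth on `𝔻₀`, and
`u = log h_{β,θ}` satisfies `Δu = -|z|^{2β-2}/h_{β,θ}²`: the metric
`k_{β,θ} = diag(h_{β,θ}, h_{β,θ}⁻¹)` is Hermitian–Einstein for the Higgs field
`φ = [[0,0],[z^β/2,0]]·z⁻¹dz`. -/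
theorem stmt17 (β θ : ℝ) (hθ : 0 < θ) :
    (∀ z ∈ puncturedDisk, 0 < twistedConeMetric β θ z) ∧
    ContDiffOn ℝ (⊤ : ℕ∞) (twistedConeMetric β θ) puncturedDisk ∧
    ∀ z ∈ puncturedDisk,
      planarLaplacian (fun z : ℂ => Real.log (twistedConeMetric β θ z)) z
        = -(‖z‖) ^ (2 * β - 2) / (twistedConeMetric β θ z)^2 := by
  refine ⟨fun z hz => twistedConeMetric_pos hθ hz,
    fun z hz => (contDiffAt_twistedConeMetric β θ (norm_pos_iff.1 hz.1)).contDiffWithinAt,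
    fun z hz => planarLaplacian_log_twistedConeMetric hθ.ne' hz⟩
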